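/- arXiv:2306.17572 — 4 statements merged into one kernel-verified Lean document; each statement's English description precedes it below -/
import Mathlib

section
/- Let μ : ℕ → ℝ be a sequence of positive reals, let λ ≥ 0 and α be real numbers, and suppose there is a constant c with μ_j + λ ≥ c > α² for all j. Let s be a positive real number such that ∑_j (μ_j + λ)^{-s/2} < ∞. Then all of the following series converge, the double series converges absolutely, and ∑_j ( √(μ_j+λ) − α²/√(μ_j+λ) )^{-s} = ∑_{k=0}^∞ ( Γ(s+k) · α^{2k} / (k! · Γ(s)) ) · ∑_j (μ_j + λ)^{-s/2 - k}. -/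
/-!
Writing `A = μⱼ + λ` and `a = α²`, one has `√A - a/√A = (1 - a/A) √A`, so each term of
the left-hand side is `A^(-s/2) (1 - a/A)^(-s)`, and the binomial series of `(1 - x)^(-s)`, whose
coefficients `Ring.choose (s + k - 1) k` equal `Γ(s+k) / (k! Γ(s))`, expands it in powers of
`a/A`. Since `a < c ≤ A`, all terms are nonnegative and the `j`-th row sum is at most
`(1 - a/c)^(-s) A^(-s/2)`, which is summable in `j`; so the double series converges absolutely
and the two iterated sums may be exchanged.
-/

open Real

theorem Real.Gamma_add_nat_eq_ascPochhammer_mul {s : ℝ} (hs : 0 < s) (n : ℕ) :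
    Gamma (s + n) = (ascPochhammer ℝ n).eval s * Gamma s := by
  induction n with
  | zero => simp
  | succ n ih =>
    rw [Nat.cast_succ, ← add_assoc, Gamma_add_one (by positivity : s + n ≠ 0), ih,
      ascPochhammer_succ_right]
    simp only [Polynomial.eval_mul, Polynomial.eval_add, Polynomial.eval_X,
      Polynomial.eval_natCast]
    ring

theorem Ring.choose_add_nat_sub_one_eq_Gamma_div {s : ℝ} (hs : 0 < s) (n : ℕ) :
    Ring.choose (s + n - 1) n = Gamma (s + n) / (n.factorial * Gamma s) := by
  have h := Ring.factorial_nsmul_multichoose_eq_ascPochhammer s n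
  rw [Polynomial.ascPochhammer_smeval_eq_eval, nsmul_eq_mul] at h
  rw [← Ring.multichoose_eq, Real.Gamma_add_nat_eq_ascPochhammer_mul hs, ← h]
  field_simp [(Gamma_pos_of_pos hs).ne']

theorem Real.hasSum_Gamma_div_mul_pow {s : ℝ} (hs : 0 < s) {x : ℝ} (hx : |x| < 1) :
    HasSum (fun n : ℕ => Gamma (s + n) / (n.factorial * Gamma s) * x ^ n) ((1 - x) ^ (-s)) := by
  have h := (one_div_one_sub_rpow_hasFPowerSeriesOnBall_zero s).hasSum
    (y := x) (by simpa [enorm_eq_nnnorm, ← NNReal.coe_lt_coe] using hx)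
  simp only [FormalMultilinearSeries.ofScalars_apply_eq, smul_eq_mul, zero_add] at h
  rw [rpow_neg (by linarith [abs_lt.1 hx]), ← one_div]
  simpa only [Ring.choose_add_nat_sub_one_eq_Gamma_div hs] using h

theorem Real.sqrt_sub_div_sqrt_rpow_neg {A : ℝ} (hA : 0 < A) {a : ℝ} (haA : a ≤ A) (s : ℝ) :
    (√A - a / √A) ^ (-s) = (1 - a / A) ^ (-s) * A ^ (-(s / 2)) := by
  have hsqrtA : 0 < √A := sqrt_pos.2 hA
  have hfactor : √A - a / √A = (1 - a / A) * √A := by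
    field_simp
    rw [sq_sqrt hA.le, mul_comm]
  rw [hfactor, mul_rpow (by rw [sub_nonneg, div_le_one hA]; exact haA) hsqrtA.le,
    sqrt_eq_rpow, ← rpow_mul hA.le]
  ring_nf

theorem Real.hasSum_sqrt_sub_div_sqrt_rpow_neg {s : ℝ} (hs : 0 < s) {a A : ℝ} (ha : |a| < A) :
    HasSum (fun k : ℕ => Gamma (s + k) * a ^ k / (k.factorial * Gamma s) * A ^ (-(s / 2) - k))
      ((√A - a / √A) ^ (-s)) := by
  have hA : 0 < A := (abs_nonneg a).trans_lt ha
  have hx : |a / A| < 1 := by rwa [abs_div, abs_of_pos hA, div_lt_one hA]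
  rw [sqrt_sub_div_sqrt_rpow_neg hA (le_of_abs_le ha.le)]
  refine ((hasSum_Gamma_div_mul_pow hs hx).mul_right (A ^ (-(s / 2)))).congr_fun fun k => ?_
  rw [rpow_sub hA, rpow_natCast, div_pow]
  field_simp

theorem Real.sqrt_sub_div_sqrt_rpow_neg_le {s : ℝ} (hs : 0 ≤ s) {a c A : ℝ} (ha : 0 ≤ a)
    (hac : a < c) (hcA : c ≤ A) :
    (√A - a / √A) ^ (-s) ≤ (1 - a / c) ^ (-s) * A ^ (-(s / 2)) := by
  have hc : 0 < c := ha.trans_lt hac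
  have hA : 0 < A := hc.trans_le hcA
  rw [sqrt_sub_div_sqrt_rpow_neg hA (hac.le.trans hcA)]
  refine mul_le_mul_of_nonneg_right (rpow_le_rpow_of_nonpos ?_ ?_ (by linarith))
    (rpow_nonneg hA.le _)
  · rw [sub_pos, div_lt_one hc]; exact hac
  · gcongr

theorem summable_rpow_sub_nat {A : ℕ → ℝ} {c r : ℝ} (hc : 0 < c) (hcA : ∀ j, c ≤ A j)
    (h : Summable fun j => A j ^ r) (k : ℕ) : Summable fun j => A j ^ (r - k) := by
  have hA (j : ℕ) : 0 < A j := hc.trans_le (hcA j)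
  refine (h.mul_right (c ^ k)⁻¹).of_nonneg_of_le (fun j => rpow_nonneg (hA j).le _) fun j => ?_
  rw [rpow_sub (hA j), rpow_natCast, div_eq_mul_inv]
  exact mul_le_mul_of_nonneg_left (inv_anti₀ (pow_pos hc k) (pow_le_pow_left₀ hc.le (hcA j) k))
    (rpow_nonneg (hA j).le _)

theorem zeta_expansion_robin_general (μ : ℕ → ℝ) (lam α c : ℝ)
    (hc : ∀ j, c ≤ μ j + lam) (hcα : α ^ 2 < c)
    (s : ℝ) (hs : 0 < s)
    (hsum : Summable fun j : ℕ => (μ j + lam) ^ (-(s / 2))) :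
    Summable (fun j : ℕ =>
        (Real.sqrt (μ j + lam) - α ^ 2 / Real.sqrt (μ j + lam)) ^ (-s)) ∧
    (∀ k : ℕ, Summable fun j : ℕ => (μ j + lam) ^ (-(s / 2) - k)) ∧
    Summable (fun p : ℕ × ℕ =>
        ‖Real.Gamma (s + p.1) * α ^ (2 * p.1) / (Nat.factorial p.1 * Real.Gamma s)
          * (μ p.2 + lam) ^ (-(s / 2) - p.1)‖) ∧
    (∑' j : ℕ, (Real.sqrt (μ j + lam) - α ^ 2 / Real.sqrt (μ j + lam)) ^ (-s))
      = ∑' k : ℕ, Real.Gamma (s + k) * α ^ (2 * k) / (Nat.factorial k * Real.Gamma s)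
          * ∑' j : ℕ, (μ j + lam) ^ (-(s / 2) - k) := by
  simp only [pow_mul]
  have hα (j : ℕ) : α ^ 2 < μ j + lam := hcα.trans_le (hc j)
  set term : ℕ → ℕ → ℝ := fun k j =>
    Gamma (s + k) * (α ^ 2) ^ k / (k.factorial * Gamma s) * (μ j + lam) ^ (-(s / 2) - k)
  have hterm_nonneg (k j : ℕ) : 0 ≤ term k j := by
    have := (sq_nonneg α).trans_lt (hα j)
    have := Gamma_pos_of_pos hs
    have := Gamma_pos_of_pos (by positivity : 0 < s + k)
    positivity
  have hrow (j : ℕ) : HasSum (term · j) ((√(μ j + lam) - α ^ 2 / √(μ j + lam)) ^ (-s)) :=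
    hasSum_sqrt_sub_div_sqrt_rpow_neg hs ((abs_of_nonneg (sq_nonneg α)).trans_lt (hα j))
  have hlhs : Summable fun j => (√(μ j + lam) - α ^ 2 / √(μ j + lam)) ^ (-s) :=
    (hsum.mul_left _).of_nonneg_of_le (fun j => (hrow j).nonneg (hterm_nonneg · j))
      fun j => sqrt_sub_div_sqrt_rpow_neg_le hs.le (sq_nonneg α) hcα (hc j)
  have hdouble : Summable fun p : ℕ × ℕ => term p.1 p.2 :=
    ((summable_prod_of_nonneg fun q : ℕ × ℕ => hterm_nonneg q.2 q.1).2
      ⟨fun j => (hrow j).summable, hlhs.congr fun j => (hrow j).tsum_eq.symm⟩).prod_symm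
  refine ⟨hlhs, summable_rpow_sub_nat ((sq_nonneg α).trans_lt hcα) hc hsum,
    hdouble.congr fun p => (norm_of_nonneg (hterm_nonneg p.1 p.2)).symm, ?_⟩
  calc ∑' j, (√(μ j + lam) - α ^ 2 / √(μ j + lam)) ^ (-s)
      = ∑' j, ∑' k, term k j := tsum_congr fun j => (hrow j).tsum_eq.symm
    _ = ∑' k, ∑' j, term k j := hdouble.tsum_comm
    _ = _ := tsum_congr fun k => tsum_mul_left

/-- Summed form of the binomial expansion (2.49): for a sequence `μ` of positive reals with
`μ j + λ ≥ c > α²` and `s > 0` with `∑ⱼ (μⱼ+λ)^(-s/2) < ∞`, one has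
`∑ⱼ (√(μⱼ+λ) - α²/√(μⱼ+λ))^(-s) = ∑ₖ (Γ(s+k) α^(2k) / (k! Γ(s))) ∑ⱼ (μⱼ+λ)^(-s/2-k)`,
with all series convergent and the double series absolutely convergent. -/
theorem zeta_expansion_robin (μ : ℕ → ℝ) (hμ : ∀ j, 0 < μ j) (lam α c : ℝ)
    (hlam : 0 ≤ lam) (hc : ∀ j, c ≤ μ j + lam) (hcα : α ^ 2 < c)
    (s : ℝ) (hs : 0 < s)
    (hsum : Summable fun j : ℕ => (μ j + lam) ^ (-(s / 2))) :
    Summable (fun j : ℕ =>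
        (Real.sqrt (μ j + lam) - α ^ 2 / Real.sqrt (μ j + lam)) ^ (-s)) ∧
    (∀ k : ℕ, Summable fun j : ℕ => (μ j + lam) ^ (-(s / 2) - k)) ∧
    Summable (fun p : ℕ × ℕ =>
        ‖Real.Gamma (s + p.1) * α ^ (2 * p.1) / (Nat.factorial p.1 * Real.Gamma s)
          * (μ p.2 + lam) ^ (-(s / 2) - p.1)‖) ∧
    (∑' j : ℕ, (Real.sqrt (μ j + lam) - α ^ 2 / Real.sqrt (μ j + lam)) ^ (-s))
      = ∑' k : ℕ, Real.Gamma (s + k) * α ^ (2 * k) / (Nat.factorial k * Real.Gamma s)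
          * ∑' j : ℕ, (μ j + lam) ^ (-(s / 2) - k) :=
  zeta_expansion_robin_general μ lam α c hc hcα s hs hsum
end

section
/- Let L > 0 and λ > 0 be real numbers, and let u, v : ℝ → ℝ be functions such that for every x ∈ [0, L], u has derivative v(x) at x and v has derivative λ·u(x) at x (so u'' = λu on [0,L]). Then −v(0) = ( √λ·(e^{2√λ L} + 1)/(e^{2√λ L} − 1) )·u(0) − ( 2√λ·e^{√λ L}/(e^{2√λ L} − 1) )·u(L), and v(L) = −( 2√λ·e^{√λ L}/(e^{2√λ L} − 1) )·u(0) + ( √λ·(e^{2√λ L} + 1)/(e^{2√λ L} − 1) )·u(L). -/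
/-!
For `σ² = λ` the characteristic combination `w = u' + σ u` solves the first-order equation
`w' = σ w`, hence `w L = w 0 · e^{σ L}`. Taking `σ = ±√λ` gives two linear relations between
`u 0, u L, u' 0, u' L`, and solving them for the derivatives yields the matrix.
-/

open Real Set

theorem eq_mul_exp_of_hasDerivAt_mul {f : ℝ → ℝ} {c a b : ℝ}
    (hf : ∀ x ∈ Icc a b, HasDerivAt f (c * f x) x) :
    ∀ x ∈ Icc a b, f x = f a * exp (c * (x - a)) := by
  set g : ℝ → ℝ := fun x => f x * exp (-(c * (x - a)))
  have hg : ∀ x ∈ Icc a b, HasDerivAt g 0 x := by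
    intro x hx
    have hexp : HasDerivAt (fun y => exp (-(c * (y - a)))) (exp (-(c * (x - a))) * -c) x := by
      simpa using (((hasDerivAt_id x).sub_const a).const_mul c).neg.exp
    exact ((hf x hx).mul hexp).congr_deriv (by ring)
  have hconst := constant_of_has_deriv_right_zero
    (fun x hx => (hg x hx).continuousAt.continuousWithinAt)
    (fun x hx => (hg x (Ico_subset_Icc_self hx)).hasDerivWithinAt)
  intro x hx
  have hgx := hconst x hx
  simp only [g, sub_self, mul_zero, neg_zero, exp_zero, mul_one] at hgx
  rw [← hgx, mul_assoc, ← exp_add, neg_add_cancel, exp_zero, mul_one]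

theorem hasDerivAt_characteristic_combination {u v : ℝ → ℝ} {lam σ x : ℝ} (hσ : σ ^ 2 = lam)
    (hu : HasDerivAt u (v x) x) (hv : HasDerivAt v (lam * u x) x) :
    HasDerivAt (fun y => v y + σ * u y) (σ * (v x + σ * u x)) x :=
  (hv.add (hu.const_mul σ)).congr_deriv (by rw [← hσ]; ring)

theorem neumann_eq_of_exp_relations {s E u₀ u₁ v₀ v₁ : ℝ} (hE : 1 < E)
    (hplus : v₁ + s * u₁ = (v₀ + s * u₀) * E) (hminus : v₁ - s * u₁ = (v₀ - s * u₀) * E⁻¹) :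
    -v₀ = s * (E ^ 2 + 1) / (E ^ 2 - 1) * u₀ - 2 * s * E / (E ^ 2 - 1) * u₁ ∧
    v₁ = -(2 * s * E / (E ^ 2 - 1)) * u₀ + s * (E ^ 2 + 1) / (E ^ 2 - 1) * u₁ := by
  have hE0 : E ≠ 0 := by positivity
  have hE2 : E ^ 2 - 1 ≠ 0 := by nlinarith
  field_simp at hminus ⊢
  constructor
  · linear_combination E * hplus - hminus
  · linear_combination -hplus + E * hminus

/-- The Dirichlet-to-Neumann matrix (4.19): if `u'' = λ u` on `[0, L]` (with `u' = v`),
then the outward normal derivatives `(-v 0, v L)` are the given explicit 2×2 matrix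
applied to the boundary values `(u 0, u L)`. -/
theorem dirichlet_to_neumann_interval (L lam : ℝ) (hL : 0 < L) (hlam : 0 < lam)
    (u v : ℝ → ℝ)
    (hu : ∀ x ∈ Set.Icc (0 : ℝ) L, HasDerivAt u (v x) x)
    (hv : ∀ x ∈ Set.Icc (0 : ℝ) L, HasDerivAt v (lam * u x) x) :
    -v 0 = (Real.sqrt lam * (Real.exp (2 * Real.sqrt lam * L) + 1)
              / (Real.exp (2 * Real.sqrt lam * L) - 1)) * u 0
          - (2 * Real.sqrt lam * Real.exp (Real.sqrt lam * L)
              / (Real.exp (2 * Real.sqrt lam * L) - 1)) * u L ∧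
    v L = -(2 * Real.sqrt lam * Real.exp (Real.sqrt lam * L)
              / (Real.exp (2 * Real.sqrt lam * L) - 1)) * u 0
          + (Real.sqrt lam * (Real.exp (2 * Real.sqrt lam * L) + 1)
              / (Real.exp (2 * Real.sqrt lam * L) - 1)) * u L := by
  have hL_mem : L ∈ Icc 0 L := right_mem_Icc.2 hL.le
  have characteristic : ∀ σ, σ ^ 2 = lam → v L + σ * u L = (v 0 + σ * u 0) * exp (σ * L) := by
    intro σ hσ
    simpa using eq_mul_exp_of_hasDerivAt_mul
      (fun x hx => hasDerivAt_characteristic_combination hσ (hu x hx) (hv x hx)) L hL_mem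
  have hsq : √lam ^ 2 = lam := sq_sqrt hlam.le
  have hplus := characteristic (√lam) hsq
  have hminus : v L - √lam * u L = (v 0 - √lam * u 0) * (exp (√lam * L))⁻¹ := by
    simpa [← sub_eq_add_neg, exp_neg] using characteristic (-√lam) (by rw [neg_sq, hsq])
  have hE : 1 < exp (√lam * L) := one_lt_exp_iff.2 (by positivity)
  have hexp2 : exp (2 * √lam * L) = exp (√lam * L) ^ 2 := by
    rw [← exp_nat_mul]; ring_nf
  simpa only [hexp2, mul_div_assoc] using neumann_eq_of_exp_relations hE hplus hminus
end

section
/- Let x > 0, a > 0, b > 0, and α be real numbers with x ≠ α and x ≠ −α, and suppose x·tanh(ax) + α ≠ 0 and x·tanh(bx) − α ≠ 0. Then 1/( x·tanh(ax) + α ) + 1/( x·tanh(bx) − α ) = ( 2x/(x² − α²) ) · ( 1 − e^{−2(a+b)x} ) / ( (1 − ((x−α)/(x+α))·e^{−2ax}) · (1 − ((x+α)/(x−α))·e^{−2bx}) ), and in particular the two factors in the denominator on the right-hand side are nonzero. -/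
/-!
Write `u = e^{-2ax}`, `v = e^{-2bx}`, `A = x + α`, `B = x - α`. Since
`tanh t = (1 - e^{-2t}) / (1 + e^{-2t})`, the two Robin symbols are
`x tanh(ax) + α = (A - B u) / (1 + u)` and `x tanh(bx) - α = (B - A v) / (1 + v)`,
and the identity reduces to `(1 + u)(B - A v) + (1 + v)(A - B u) = (A + B)(1 - u v)`,
with `A + B = 2x`, `A B = x² - α²` and `e^{-2(a+b)x} = u v`.
-/

open Real

theorem Real.tanh_eq_one_sub_exp_div_one_add_exp (t : ℝ) :
    tanh t = (1 - exp (-2 * t)) / (1 + exp (-2 * t)) := by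
  have hexp : exp (-2 * t) = exp (-t) * exp (-t) := by rw [← exp_add]; ring_nf
  have hinv : exp (-t) * exp t = 1 := by rw [← exp_add, neg_add_cancel, exp_zero]
  rw [tanh_eq, hexp, ← mul_div_mul_left _ _ (exp_pos (-t)).ne']
  congr 1 <;> linear_combination hinv

theorem Real.mul_tanh_add_eq_div (x α t : ℝ) :
    x * tanh t + α = ((x + α) - (x - α) * exp (-2 * t)) / (1 + exp (-2 * t)) := by
  have hpos : 0 < 1 + exp (-2 * t) := by positivity
  rw [tanh_eq_one_sub_exp_div_one_add_exp, eq_div_iff hpos.ne']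
  field_simp
  ring

theorem one_div_add_one_div_eq_of_reflection {K : Type*} [Field K] {A B u v : K}
    (hA : A ≠ 0) (hB : B ≠ 0) (hP : A - B * u ≠ 0) (hQ : B - A * v ≠ 0) :
    1 / ((A - B * u) / (1 + u)) + 1 / ((B - A * v) / (1 + v))
      = (A + B) / (A * B) * (1 - u * v) / ((A - B * u) / A * ((B - A * v) / B)) := by
  field_simp
  ring

theorem robin_cut_mode_identity_general (x a b α : ℝ)
    (h1 : x ≠ α) (h2 : x ≠ -α)
    (hd1 : x * Real.tanh (a * x) + α ≠ 0) (hd2 : x * Real.tanh (b * x) - α ≠ 0) :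
    1 / (x * Real.tanh (a * x) + α) + 1 / (x * Real.tanh (b * x) - α)
      = (2 * x / (x ^ 2 - α ^ 2)) * (1 - Real.exp (-2 * (a + b) * x))
          / ((1 - ((x - α) / (x + α)) * Real.exp (-2 * a * x))
            * (1 - ((x + α) / (x - α)) * Real.exp (-2 * b * x))) ∧
    1 - ((x - α) / (x + α)) * Real.exp (-2 * a * x) ≠ 0 ∧
    1 - ((x + α) / (x - α)) * Real.exp (-2 * b * x) ≠ 0 := by
  have hA : x + α ≠ 0 := fun h => h2 (by linarith)
  have hB : x - α ≠ 0 := sub_ne_zero.mpr h1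
  have e1 : x * tanh (a * x) + α
      = ((x + α) - (x - α) * exp (-2 * a * x)) / (1 + exp (-2 * a * x)) := by
    rw [mul_tanh_add_eq_div, mul_assoc]
  have e2 : x * tanh (b * x) - α
      = ((x - α) - (x + α) * exp (-2 * b * x)) / (1 + exp (-2 * b * x)) := by
    rw [sub_eq_add_neg, mul_tanh_add_eq_div, mul_assoc, ← sub_eq_add_neg, sub_neg_eq_add]
  have hP : (x + α) - (x - α) * exp (-2 * a * x) ≠ 0 := fun h => hd1 (by rw [e1, h, zero_div])
  have hQ : (x - α) - (x + α) * exp (-2 * b * x) ≠ 0 := fun h => hd2 (by rw [e2, h, zero_div])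
  have f1 : 1 - (x - α) / (x + α) * exp (-2 * a * x)
      = ((x + α) - (x - α) * exp (-2 * a * x)) / (x + α) := by
    rw [div_mul_eq_mul_div, one_sub_div hA]
  have f2 : 1 - (x + α) / (x - α) * exp (-2 * b * x)
      = ((x - α) - (x + α) * exp (-2 * b * x)) / (x - α) := by
    rw [div_mul_eq_mul_div, one_sub_div hB]
  have hexp : exp (-2 * (a + b) * x) = exp (-2 * a * x) * exp (-2 * b * x) := by
    rw [← exp_add]; ring_nf
  refine ⟨?_, f1 ▸ div_ne_zero hP hA, f2 ▸ div_ne_zero hQ hB⟩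
  rw [e1, e2, f1, f2, hexp, show 2 * x = (x + α) + (x - α) by ring,
    show x ^ 2 - α ^ 2 = (x + α) * (x - α) by ring]
  exact one_div_add_one_div_eq_of_reflection hA hB hP hQ

/-- Mode-wise identity behind (4.36): for `x, a, b > 0` and `x ≠ ±α`, with nonvanishing
denominators,
`1/(x tanh(ax) + α) + 1/(x tanh(bx) - α)
  = (2x/(x²-α²)) (1 - e^{-2(a+b)x}) / ((1 - ((x-α)/(x+α))e^{-2ax})(1 - ((x+α)/(x-α))e^{-2bx}))`,
and the two factors in the denominator on the right are nonzero. -/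
theorem robin_cut_mode_identity (x a b α : ℝ) (hx : 0 < x) (ha : 0 < a) (hb : 0 < b)
    (h1 : x ≠ α) (h2 : x ≠ -α)
    (hd1 : x * Real.tanh (a * x) + α ≠ 0) (hd2 : x * Real.tanh (b * x) - α ≠ 0) :
    1 / (x * Real.tanh (a * x) + α) + 1 / (x * Real.tanh (b * x) - α)
      = (2 * x / (x ^ 2 - α ^ 2)) * (1 - Real.exp (-2 * (a + b) * x))
          / ((1 - ((x - α) / (x + α)) * Real.exp (-2 * a * x))
            * (1 - ((x + α) / (x - α)) * Real.exp (-2 * b * x))) ∧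
    1 - ((x - α) / (x + α)) * Real.exp (-2 * a * x) ≠ 0 ∧
    1 - ((x + α) / (x - α)) * Real.exp (-2 * b * x) ≠ 0 :=
  robin_cut_mode_identity_general x a b α h1 h2 hd1 hd2
end

section
/- Let k ≥ 1 be an integer and define g : ℝ → ℝ by g(s) = 2·Γ(s/2 + 1)·( ∏_{p=1}^{k-1}(s + p) ) / Γ((s+k)/2), where Γ is the real Gamma function. Then: (a) for every s > 0, g(s) = Γ(s+k)·Γ(s/2) / ( Γ(s)·Γ((s+k)/2) ); and (b) the derivative of g at 0 equals ( Γ(k)/Γ(k/2) )·( 2·∑_{p=1}^{k-1} 1/p − c_k ), where c_k = ∑_{p=1}^{k/2 − 1} 1/p if k is even (interpreted as 0 when k = 2), and c_k = −2·log 2 + 2·∑_{p=1}^{⌊k/2⌋} 1/(2p−1) if k is odd (the sum interpreted as 0 when k = 1). -/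
/-!
Near `s = 0` all Gamma factors are smooth and positive, so part (b) is the quotient rule once
`Γ'(1) = -γ` and `Γ'(k/2)` are known. The latter follows from the recursion
`Γ'(x + 1) = Γ(x) + x Γ'(x)`, i.e. `ψ(x + 1) = ψ(x) + 1/x` for `ψ = Γ'/Γ`, started at
`Γ'(1) = -γ` for even `k` and at `Γ'(1/2) = -√π (γ + 2 log 2)` for odd `k`; the constant `γ`
cancels against `Γ'(1)`. Part (a) is `2 Γ(s/2 + 1) = s Γ(s/2)` together with
`Γ(s + k) = Γ(s) s (s + 1) ⋯ (s + k - 1)`.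
-/

open Real Finset

local notation "γ" => eulerMascheroniConstant

@[to_additive sum_Icc_one_eq_sum_range]
theorem Finset.prod_Icc_one_eq_prod_range {M : Type*} [CommMonoid M] (f : ℕ → M) (n : ℕ) :
    ∏ p ∈ Icc 1 n, f p = ∏ j ∈ range n, f (j + 1) := by
  induction n with
  | zero => simp
  | succ n ih => rw [prod_Icc_succ_top (by omega), ih, prod_range_succ]

theorem Finset.prod_range_succ_add_eq_mul_prod_Icc {R : Type*} [CommSemiring R] (s : R)
    (n : ℕ) : ∏ j ∈ range (n + 1), (s + j) = s * ∏ p ∈ Icc 1 n, (s + p) := by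
  rw [prod_range_succ', prod_Icc_one_eq_prod_range]
  push_cast
  ring

theorem hasDerivAt_prod_add {ι : Type*} (u : Finset ι) (c : ι → ℝ) {x : ℝ}
    (hc : ∀ i ∈ u, x + c i ≠ 0) :
    HasDerivAt (fun s => ∏ i ∈ u, (s + c i))
      ((∏ i ∈ u, (x + c i)) * ∑ i ∈ u, 1 / (x + c i)) x := by
  classical
  refine (HasDerivAt.fun_finsetProd fun i _ => (hasDerivAt_id' x).add_const (c i)).congr_deriv ?_
  rw [mul_sum]
  refine sum_congr rfl fun i hi => ?_
  rw [← mul_prod_erase u _ hi, smul_eq_mul, mul_one]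
  field_simp [hc i hi]

namespace Real

theorem Gamma_add_nat {s : ℝ} (hs : ∀ m : ℕ, s ≠ -m) (n : ℕ) :
    Gamma (s + n) = Gamma s * ∏ j ∈ range n, (s + j) := by
  induction n with
  | zero => simp
  | succ n ih =>
    have hsn : s + n ≠ 0 := fun h => hs n (by linarith)
    rw [Nat.cast_succ, ← add_assoc, Gamma_add_one hsn, ih, prod_range_succ]
    ring

theorem Gamma_nat_add_one_eq_prod_Icc (n : ℕ) : Gamma (n + 1) = ∏ p ∈ Icc 1 n, (p : ℝ) := by
  rw [Gamma_nat_eq_factorial, Nat.factorial_eq_prod_range_add_one, prod_Icc_one_eq_prod_range]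
  push_cast
  rfl

theorem hasDerivAt_Gamma_add_one {x D : ℝ} (hx : x ≠ 0) (h : HasDerivAt Gamma D x) :
    HasDerivAt Gamma (Gamma x + x * D) (x + 1) := by
  have hshift : HasDerivAt (fun s => (s - 1) * Gamma (s - 1)) (Gamma x + x * D) (x + 1) := by
    have h1 : HasDerivAt (fun s : ℝ => s - 1) 1 (x + 1) := (hasDerivAt_id _).sub_const 1
    have h2 : HasDerivAt Gamma D (x + 1 - 1) := by rwa [add_sub_cancel_right]
    simpa using h1.fun_mul (h2.comp_sub_const (x + 1) 1)
  refine hshift.congr_of_eventuallyEq ?_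
  filter_upwards [(continuous_sub_right (1 : ℝ)).continuousAt.eventually_ne
    (by simpa using hx : x + 1 - 1 ≠ 0)] with s hs
  rw [← Gamma_add_one hs, sub_add_cancel]

theorem hasDerivAt_Gamma_add_nat {x D : ℝ} (hx : ∀ m : ℕ, x ≠ -m)
    (h : HasDerivAt Gamma (Gamma x * D) x) (n : ℕ) :
    HasDerivAt Gamma (Gamma (x + n) * (D + ∑ j ∈ range n, 1 / (x + j))) (x + n) := by
  induction n with
  | zero => simpa using h
  | succ n ih =>
    have hxn : x + n ≠ 0 := fun h => hx n (by linarith)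
    convert hasDerivAt_Gamma_add_one hxn ih using 1
    · rw [Nat.cast_succ, ← add_assoc, Gamma_add_one hxn, sum_range_succ]
      field_simp
      ring
    · push_cast
      ring

end Real

/-- `ψ(k/2) - ψ(1)` for the digamma function `ψ = Γ'/Γ`, in the closed form of (2.59). -/
noncomputable def digammaHalfSubDigammaOne (k : ℕ) : ℝ :=
  if k % 2 = 0 then ∑ p ∈ Icc 1 (k / 2 - 1), (1 : ℝ) / (p : ℝ)
  else -2 * log 2 + 2 * ∑ p ∈ Icc 1 (k / 2), (1 : ℝ) / (2 * (p : ℝ) - 1)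

theorem hasDerivAt_Gamma_half_nat {k : ℕ} (hk : 1 ≤ k) :
    HasDerivAt Gamma (Gamma (k / 2) * (-γ + digammaHalfSubDigammaOne k)) (k / 2) := by
  rcases Nat.even_or_odd' k with ⟨m, rfl | rfl⟩
  · obtain ⟨n, rfl⟩ : ∃ n, m = n + 1 := ⟨m - 1, by omega⟩
    have h1 : HasDerivAt Gamma (Gamma 1 * -γ) 1 := by simpa using hasDerivAt_Gamma_one
    have hhalf : ((2 * (n + 1) : ℕ) : ℝ) / 2 = 1 + n := by push_cast; ring
    have hc : digammaHalfSubDigammaOne (2 * (n + 1)) = ∑ j ∈ range n, 1 / (1 + (j : ℝ)) := by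
      simp only [digammaHalfSubDigammaOne, Nat.mul_mod_right, if_true,
        Nat.mul_div_cancel_left _ two_pos, Nat.add_sub_cancel, sum_Icc_one_eq_sum_range]
      push_cast
      simp only [add_comm]
    rw [hhalf, hc]
    exact hasDerivAt_Gamma_add_nat (fun m => by linarith [(m.cast_nonneg : (0 : ℝ) ≤ m)]) h1 n
  · have h1 : HasDerivAt Gamma (Gamma (1 / 2) * (-γ - 2 * log 2)) (1 / 2) := by
      convert hasDerivAt_Gamma_one_half using 1
      rw [Gamma_one_half_eq]
      ring
    have hhalf : ((2 * m + 1 : ℕ) : ℝ) / 2 = 1 / 2 + m := by push_cast; ring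
    have hc : -γ + digammaHalfSubDigammaOne (2 * m + 1) =
        -γ - 2 * log 2 + ∑ j ∈ range m, 1 / (1 / 2 + (j : ℝ)) := by
      have hmod : (2 * m + 1) % 2 = 1 := by omega
      have hdiv : (2 * m + 1) / 2 = m := by omega
      have hterm (j : ℕ) : 2 * (1 / (2 * ((j + 1 : ℕ) : ℝ) - 1)) = 1 / (1 / 2 + j) := by
        rw [Nat.cast_succ, show 2 * ((j : ℝ) + 1) - 1 = 2 * j + 1 by ring]
        field_simp
        ring
      simp only [digammaHalfSubDigammaOne, hmod, hdiv, sum_Icc_one_eq_sum_range, mul_sum, hterm]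
      norm_num
      ring
    rw [hhalf, hc]
    exact hasDerivAt_Gamma_add_nat (fun m => by linarith [(m.cast_nonneg : (0 : ℝ) ≤ m)]) h1 m

/-- The Gamma computation (2.58)–(2.59): for `k ≥ 1`, the function
`g(s) = 2 Γ(s/2+1) ∏_{p=1}^{k-1}(s+p) / Γ((s+k)/2)` equals
`Γ(s+k)Γ(s/2)/(Γ(s)Γ((s+k)/2))` for `s > 0`, and its derivative at `0` is
`(Γ(k)/Γ(k/2)) (2 ∑_{p=1}^{k-1} 1/p - c_k)` with `c_k` as in (2.59). -/
theorem gamma_quotient_deriv_at_zero (k : ℕ) (hk : 1 ≤ k) :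
    (∀ s : ℝ, 0 < s →
      2 * Real.Gamma (s / 2 + 1) * (∏ p ∈ Finset.Icc 1 (k - 1), (s + (p : ℝ)))
          / Real.Gamma ((s + k) / 2)
        = Real.Gamma (s + k) * Real.Gamma (s / 2)
            / (Real.Gamma s * Real.Gamma ((s + k) / 2))) ∧
    HasDerivAt
      (fun s : ℝ =>
        2 * Real.Gamma (s / 2 + 1) * (∏ p ∈ Finset.Icc 1 (k - 1), (s + (p : ℝ)))
          / Real.Gamma ((s + k) / 2))
      ((Real.Gamma k / Real.Gamma ((k : ℝ) / 2))
        * (2 * (∑ p ∈ Finset.Icc 1 (k - 1), (1 : ℝ) / (p : ℝ))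
            - (if k % 2 = 0 then ∑ p ∈ Finset.Icc 1 (k / 2 - 1), (1 : ℝ) / (p : ℝ)
               else -2 * Real.log 2
                 + 2 * ∑ p ∈ Finset.Icc 1 (k / 2), (1 : ℝ) / (2 * (p : ℝ) - 1))))
      0 := by
  have hΓk : 0 < Gamma ((k : ℝ) / 2) := Gamma_pos_of_pos (by positivity)
  obtain ⟨n, rfl⟩ : ∃ n, k = n + 1 := ⟨k - 1, by omega⟩
  rw [Nat.add_sub_cancel]
  refine ⟨fun s hs => ?_, ?_⟩
  · have hhalf : 2 * Gamma (s / 2 + 1) = s * Gamma (s / 2) := by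
      rw [Gamma_add_one (by positivity)]
      ring
    have hΓs := (Gamma_pos_of_pos hs).ne'
    rw [Gamma_add_nat (fun m => by linarith [(m.cast_nonneg : (0 : ℝ) ≤ m)]),
      prod_range_succ_add_eq_mul_prod_Icc, hhalf]
    field_simp
  · have hnum : HasDerivAt (fun s : ℝ => Gamma (s / 2 + 1)) (-γ * (1 / 2)) 0 := by
      have h1 : HasDerivAt Gamma (-γ) ((0 : ℝ) / 2 + 1) := by simpa using hasDerivAt_Gamma_one
      exact h1.comp 0 (((hasDerivAt_id (0 : ℝ)).div_const 2).add_const 1)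
    have hden : HasDerivAt (fun s : ℝ => Gamma ((s + ↑(n + 1)) / 2))
        (Gamma ((n + 1 : ℕ) / 2) * (-γ + digammaHalfSubDigammaOne (n + 1)) * (1 / 2)) 0 := by
      have h1 : HasDerivAt Gamma (Gamma ((n + 1 : ℕ) / 2) *
          (-γ + digammaHalfSubDigammaOne (n + 1))) ((0 + ↑(n + 1)) / 2) := by
        rw [zero_add]
        exact hasDerivAt_Gamma_half_nat hk
      exact h1.comp 0 (((hasDerivAt_id (0 : ℝ)).add_const _).div_const 2)
    have hprod := hasDerivAt_prod_add (Icc 1 n) (fun p => (p : ℝ)) (x := 0) fun p hp => by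
      have := (mem_Icc.mp hp).1
      positivity
    refine (((hnum.const_mul 2).fun_mul hprod).fun_div hden
      (by simpa using hΓk.ne')).congr_deriv ?_
    simp only [zero_add, zero_div, Gamma_one, digammaHalfSubDigammaOne, Nat.cast_succ,
      Gamma_nat_add_one_eq_prod_Icc]
    field_simp
    ring
end
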